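/- Let Ω ⊂ ℝ² be open, u : Ω → S¹ measurable, χ(s,x) = 1_{e^{is}·u(x)>0}, and let φ ∈ L¹(T) be odd and π-periodic. For τ ∈ ℝ define A₁^τ(x) = ∫_{T²} φ(t−s) sin(t) cos(s) χ(t, x+τe₁) D^{τe₁}χ(s,x) ds dt and A₂^τ(x) = ∫_{T²} φ(t−s) sin(t) sin(s) χ(t,x) D^{τe₁}χ(s,x) ds dt. Then there is an absolute constant C > 0 such that |A^τ(x)| ≤ C ‖φ‖_{L¹(T)} |D^{τe₁}u(x)| for a.e. x ∈ Ω ∩ (Ω − τe₁), where A^τ = (A₁^τ, A₂^τ). -/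

import Mathlib

open MeasureTheory Filter Metric Set
open scoped Topology ENNReal RealInnerProductSpace Real

noncomputable section

/-- The Euclidean plane. -/
abbrev E2 := EuclideanSpace ℝ (Fin 2)

/-- The point `(a, b)` of the plane. -/
def mk2 (a b : ℝ) : E2 := (WithLp.equiv 2 (Fin 2 → ℝ)).symm ![a, b]

/-- The unit vector `e^{is} = (cos s, sin s)`. -/
def esDir (s : ℝ) : E2 := mk2 (Real.cos s) (Real.sin s)

/-- The angle (argument) of a vector of the plane, i.e. a measurable `θ` with
`v = e^{iθ}` for unit vectors `v`. -/
def ang (v : E2) : ℝ := Complex.arg ⟨v 0, v 1⟩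

/-- A scalar test function compactly supported in `Ω`. -/
def IsTest (Ω : Set E2) (φ : E2 → ℝ) : Prop :=
  ContDiff ℝ (⊤ : ℕ∞) φ ∧ HasCompactSupport φ ∧ tsupport φ ⊆ Ω

/-- A vector-valued test function compactly supported in `Ω`. -/
def IsTestV (Ω : Set E2) (φ : E2 → E2) : Prop :=
  ContDiff ℝ (⊤ : ℕ∞) φ ∧ HasCompactSupport φ ∧ tsupport φ ⊆ Ω

/-- `d` is the distributional divergence of the vector field `u` on `Ω`. -/
def HasWeakDiv (Ω : Set E2) (u : E2 → E2) (d : E2 → ℝ) : Prop :=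
  ∀ φ : E2 → ℝ, IsTest Ω φ →
    ∫ x in Ω, ⟪u x, gradient φ x⟫ = - ∫ x in Ω, d x * φ x

/-- `c` is the distributional curl `∂₁u₂ - ∂₂u₁` of the vector field `u` on `Ω`:
this is the distributional divergence of the rotated field `(u₂, -u₁)`. -/
def HasWeakCurl (Ω : Set E2) (u : E2 → E2) (c : E2 → ℝ) : Prop :=
  HasWeakDiv Ω (fun x => mk2 (u x 1) (-(u x 0))) c

/-- `g` is the distributional partial derivative `∂ᵢ f` on `Ω`. -/
def HasWeakPartial (Ω : Set E2) (f g : E2 → ℝ) (i : Fin 2) : Prop :=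
  ∀ φ : E2 → ℝ, IsTest Ω φ →
    ∫ x in Ω, f x * fderiv ℝ φ x (EuclideanSpace.single i 1) = - ∫ x in Ω, g x * φ x

/-- Scalar `H¹(Ω)` membership: `f ∈ L²(Ω)` with weak partial derivatives in `L²(Ω)`. -/
def MemH1 (Ω : Set E2) (f : E2 → ℝ) : Prop :=
  MemLp f 2 (volume.restrict Ω) ∧
    ∀ i : Fin 2, ∃ g : E2 → ℝ, HasWeakPartial Ω f g i ∧ MemLp g 2 (volume.restrict Ω)

/-- `u ∈ H¹(Ω; S¹)`: both components are in `H¹(Ω)` and `|u| = 1` a.e. on `Ω`. -/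
def MemH1S1 (Ω : Set E2) (u : E2 → E2) : Prop :=
  (∀ i : Fin 2, MemH1 Ω (fun x => u x i)) ∧ (∀ᵐ x ∂(volume.restrict Ω), ‖u x‖ = 1)

/-- `u ∈ B^{1/2}_{3,∞,loc}(Ω)`. -/
def MemBesovLoc (Ω : Set E2) (u : E2 → E2) : Prop :=
  ∀ Ω' : Set E2, IsOpen Ω' → IsCompact (closure Ω') → closure Ω' ⊆ Ω →
    ∃ M : ℝ, ∀ h : E2, h ≠ 0 →
      eLpNorm (fun x => u (x + h) - u x) 3
          (volume.restrict (Ω' ∩ {x | x + h ∈ Ω'})) ≤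
        ENNReal.ofReal (M * ‖h‖ ^ ((1:ℝ)/2))

/-- One-dimensional test function compactly supported in `S`. -/
def IsTest1 (S : Set ℝ) (φ : ℝ → ℝ) : Prop :=
  ContDiff ℝ (⊤ : ℕ∞) φ ∧ HasCompactSupport φ ∧ tsupport φ ⊆ S

/-- `g` is the distributional derivative of `f` on `S ⊆ ℝ`. -/
def HasWeakDeriv1 (S : Set ℝ) (f g : ℝ → ℝ) : Prop :=
  ∀ φ : ℝ → ℝ, IsTest1 S φ →
    ∫ x in S, f x * deriv φ x = - ∫ x in S, g x * φ x

/-- Scalar `H¹(S)` membership for `S ⊆ ℝ`. -/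
def MemH1_1d (S : Set ℝ) (f : ℝ → ℝ) : Prop :=
  MemLp f 2 (volume.restrict S) ∧
    ∃ g : ℝ → ℝ, HasWeakDeriv1 S f g ∧ MemLp g 2 (volume.restrict S)

/-- The class `ENT` of entropies, parametrized by the angle: `Φ(e^{iθ})` and
`λ_Φ(e^{iθ})` are `2π`-periodic, `λ_Φ` is continuous, `Φ` is `C¹` with
`(d/dθ) Φ(e^{iθ}) = λ_Φ(e^{iθ}) · i e^{iθ}` (and `i e^{iθ} = e^{i(θ + π/2)}`). -/
def IsEnt (Φ : ℝ → E2) (lam : ℝ → ℝ) : Prop :=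
  Continuous lam ∧ (∀ θ : ℝ, Φ (θ + 2*π) = Φ θ) ∧ (∀ θ : ℝ, lam (θ + 2*π) = lam θ) ∧
    ∀ θ : ℝ, HasDerivAt Φ (lam θ • esDir (θ + π/2)) θ

/-- The kinetic formulation for `u = e^{iθ}` with divergence `d`: for all test
functions `ψ(s,x)`, `2π`-periodic in `s` and compactly supported in `x` inside `Ω`,
`-∫_{T×Ω} χ(s,x) e^{is}·∇ₓψ ds dx = ∫_Ω (ψ(θ(x)+π/2, x) + ψ(θ(x)-π/2, x)) div u(x) dx`,
where `χ(s,x) = 1_{e^{is}·u(x) > 0}`. -/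
def KineticFormulation (Ω : Set E2) (u : E2 → E2) (θ : E2 → ℝ) (d : E2 → ℝ) : Prop :=
  ∀ ψ : ℝ → E2 → ℝ,
    ContDiff ℝ 1 (fun p : ℝ × E2 => ψ p.1 p.2) →
    (∀ (s : ℝ) (x : E2), ψ (s + 2*π) x = ψ s x) →
    (∃ K : Set E2, IsCompact K ∧ K ⊆ Ω ∧ ∀ s : ℝ, tsupport (ψ s) ⊆ K) →
    -(∫ s in Ioc (0:ℝ) (2*π), ∫ x in Ω,
        (if 0 < ⟪esDir s, u x⟫ then (1:ℝ) else 0) * ⟪esDir s, gradient (ψ s) x⟫)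
      = ∫ x in Ω, (ψ (θ x + π/2) x + ψ (θ x - π/2) x) * d x

/-- A bounded domain with `C^k` boundary, described by a defining function `f`:
`Ω = {f < 0}` with `∇f ≠ 0` on `∂Ω`. -/
def IsCkDomain (k : ℕ) (Ω : Set E2) (f : E2 → ℝ) : Prop :=
  Bornology.IsBounded Ω ∧ ContDiff ℝ (k : ℕ∞) f ∧ Ω = {x : E2 | f x < 0} ∧
    ∀ x ∈ frontier Ω, gradient f x ≠ 0

/-- The outer unit normal associated with a defining function. -/
def outerNormal (f : E2 → ℝ) (x : E2) : E2 := ‖gradient f x‖⁻¹ • gradient f x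

/-- `t` is the strong `L¹(∂Ω)` trace of `v`, attained as an essential limit along
the inner normal: there are `δ₀ > 0` and a null set `N ⊆ (0,δ₀)` with
`∫_{∂Ω} |v(x - δ ν(x)) - t(x)| dH¹(x) → 0` as `δ → 0`, `δ ∉ N`. -/
def HasStrongTrace (Ω : Set E2) (ν : E2 → E2) (v t : E2 → E2) : Prop :=
  ∃ δ₀ : ℝ, 0 < δ₀ ∧ ∃ N : Set ℝ, N ⊆ Ioo 0 δ₀ ∧ volume N = 0 ∧
    Tendsto (fun δ : ℝ => ∫ x in frontier Ω,
        ‖v (x - δ • ν x) - t x‖ ∂(MeasureTheory.Measure.hausdorffMeasure 1 : Measure E2))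
      (𝓝[Ioo 0 δ₀ \ N] 0) (𝓝 0)

/-- Condition (†): `⨍_{B_δ} ‖D^h u‖⁴_{L⁴(Ω ∩ (Ω-h))} δ⁻² dh → 0` as `δ → 0⁺`. -/
def CondDagger (Ω : Set E2) (u : E2 → E2) : Prop :=
  Tendsto (fun δ : ℝ =>
      ((volume (ball (0:E2) δ)).toReal)⁻¹ *
        ∫ h in ball (0:E2) δ,
          ((eLpNorm (fun x => u (x + h) - u x) 4
              (volume.restrict (Ω ∩ {x | x + h ∈ Ω}))).toReal) ^ 4 / δ ^ 2)
    (𝓝[>] (0:ℝ)) (𝓝 0)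

/-- The set `Ω_δ = {x ∈ Ω : dist(x, ∂Ω) > δ}`. -/
def innerSet (Ω : Set E2) (δ : ℝ) : Set E2 := {x ∈ Ω | δ < infDist x Ωᶜ}

/-- The mollification `u * ρ_δ` (with `u` extended by zero outside `Ω`),
where `ρ_δ(x) = δ⁻² ρ(x/δ)`. -/
def mollify (ρ : E2 → ℝ) (Ω : Set E2) (u : E2 → E2) (δ : ℝ) (x : E2) : E2 :=
  ∫ y in Ω, ((δ ^ 2)⁻¹ * ρ (δ⁻¹ • (x - y))) • u y

/-- The pointwise divergence `∂₁w₁ + ∂₂w₂` of a differentiable vector field. -/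
def ptDiv (w : E2 → E2) (x : E2) : ℝ :=
  fderiv ℝ w x (EuclideanSpace.single 0 1) 0 + fderiv ℝ w x (EuclideanSpace.single 1 1) 1

/-- First coordinate vector `e₁`. -/
def ee1 : E2 := EuclideanSpace.single 0 1

/-- The indicator `χ(s,x) = 1_{e^{is}·u(x)>0}`. -/
def chiInd (u : E2 → E2) (s : ℝ) (x : E2) : ℝ :=
  if 0 < ⟪esDir s, u x⟫ then 1 else 0

/-- The first component `A₁^τ(x)`. -/
def A1fun (φ : ℝ → ℝ) (u : E2 → E2) (τ : ℝ) (x : E2) : ℝ :=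
  ∫ s in Ioc (0:ℝ) (2*π), ∫ t in Ioc (0:ℝ) (2*π),
    φ (t - s) * Real.sin t * Real.cos s *
      (chiInd u t (x + τ • ee1) * (chiInd u s (x + τ • ee1) - chiInd u s x))

/-- The second component `A₂^τ(x)`. -/
def A2fun (φ : ℝ → ℝ) (u : E2 → E2) (τ : ℝ) (x : E2) : ℝ :=
  ∫ s in Ioc (0:ℝ) (2*π), ∫ t in Ioc (0:ℝ) (2*π),
    φ (t - s) * Real.sin t * Real.sin s *
      (chiInd u t x * (chiInd u s (x + τ • ee1) - chiInd u s x))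

/-! ### Auxiliary lemmas for Statement 12 -/

lemma norm_esDir' (s : ℝ) : ‖esDir s‖ = 1 := by
  rw [EuclideanSpace.norm_eq]
  simp [esDir, mk2, Fin.sum_univ_two, sq, Real.norm_eq_abs, abs_mul_abs_self]
  nlinarith [Real.sin_sq_add_cos_sq s]

lemma inner_esDir' (s : ℝ) (a : E2) (ha : ‖a‖ = 1) :
    ⟪esDir s, a⟫ = Real.cos (s - ang a) := by
  have hz : ‖(⟨a 0, a 1⟩ : ℂ)‖ = 1 := by
    rw [Complex.norm_def, Complex.normSq_mk]
    rw [EuclideanSpace.norm_eq] at ha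
    simpa [Fin.sum_univ_two, sq, Real.norm_eq_abs, abs_mul_abs_self] using ha
  have hz0 : (⟨a 0, a 1⟩ : ℂ) ≠ 0 := by
    intro h; rw [h] at hz; simp at hz
  have hc : Real.cos (ang a) = a 0 := by
    rw [ang, Complex.cos_arg hz0, hz]; simp
  have hs : Real.sin (ang a) = a 1 := by
    rw [ang, Complex.sin_arg, hz]; simp
  rw [Real.cos_sub, hc, hs]
  simp [esDir, mk2, PiLp.inner_apply, Fin.sum_univ_two]
  ring

lemma abs_sin_eq' (y : ℝ) (hy : |y| ≤ π/2) : |Real.sin y| = Real.sin |y| := by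
  have hπ := Real.pi_pos
  rcases le_or_gt 0 y with h | h
  · rw [abs_of_nonneg h] at hy ⊢
    rw [abs_of_nonneg (Real.sin_nonneg_of_nonneg_of_le_pi h (by linarith))]
  · rw [abs_of_neg h] at hy ⊢
    have h2 : 0 ≤ Real.sin (-y) := Real.sin_nonneg_of_nonneg_of_le_pi (by linarith) (by linarith)
    have h3 : Real.sin (-y) = - Real.sin y := Real.sin_neg y
    rw [abs_of_nonpos (by linarith), ← Real.sin_neg]

lemma measure_cos_le' (α r : ℝ) (hr : 0 ≤ r) :
    (volume (Ioc (0:ℝ) (2*π) ∩ {s | |Real.cos (s - α)| ≤ r})).toReal ≤ 3 * (π * r) := by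
  have hπ := Real.pi_pos
  set M : ℤ := ⌊(2*π - α)/π⌋ with hM
  have hsub : Ioc (0:ℝ) (2*π) ∩ {s | |Real.cos (s - α)| ≤ r} ⊆
      ⋃ k ∈ Finset.Icc (M-2) M, closedBall (α + π/2 + k*π) (π/2*r) := by
    rintro s ⟨hs, hcs⟩
    simp only [mem_setOf_eq] at hcs
    set t := s - α - π/2 with ht
    have hcos : Real.cos (s - α) = - Real.sin t := by
      rw [show s - α = t + π/2 by ring, Real.cos_add_pi_div_two]
    set k : ℤ := round (t/π) with hk
    have hk1 := abs_le.1 (abs_sub_round (t/π))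
    have he : (t/π - (k:ℝ))*π = t - k*π := by field_simp
    have hmul1 := mul_le_mul_of_nonneg_right hk1.2 hπ.le
    have hmul2 := mul_le_mul_of_nonneg_right hk1.1 hπ.le
    rw [he] at hmul1 hmul2
    have hk2u : t - (k:ℝ)*π ≤ π/2 := by linarith
    have hk2l : -(π/2) ≤ t - (k:ℝ)*π := by linarith
    have hk2 : |t - (k:ℝ)*π| ≤ π/2 := abs_le.2 ⟨hk2l, hk2u⟩
    have hsin : |Real.sin (t - k*π)| = |Real.sin t| := by
      have h1 := Real.sin_add_int_mul_pi (t - k*π) k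
      rw [show t - (k:ℝ)*π + (k:ℝ)*π = t by ring] at h1
      have habs : |((-1:ℝ))^k| = 1 := by
        rcases Int.even_or_odd k with hpar | hpar
        · rw [hpar.neg_one_zpow, abs_one]
        · rw [hpar.neg_one_zpow, abs_neg, abs_one]
      rw [h1, abs_mul, habs, one_mul]
    have hsr : |Real.sin t| ≤ r := by rwa [hcos, abs_neg] at hcs
    have hj : 2/π * |t - k*π| ≤ |Real.sin t| := by
      rw [← hsin, abs_sin_eq' _ hk2]
      exact Real.mul_le_sin (abs_nonneg _) hk2
    have hdist : |t - (k:ℝ)*π| ≤ π/2*r := by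
      have h5 : π/2 * (2/π * |t - (k:ℝ)*π|) ≤ π/2 * r :=
        mul_le_mul_of_nonneg_left (hj.trans hsr) (by positivity)
      have h6 : π/2 * (2/π * |t - (k:ℝ)*π|) = |t - (k:ℝ)*π| := by field_simp
      linarith
    have hmem : s ∈ closedBall (α + π/2 + (k:ℝ)*π) (π/2*r) := by
      rw [mem_closedBall, Real.dist_eq]
      rw [show s - (α + π/2 + (k:ℝ)*π) = t - k*π by rw [ht]; ring]
      exact hdist
    have hkM : k ≤ M := by
      apply Int.le_floor.2
      rw [le_div_iff₀ hπ]
      have hs2 : s ≤ 2*π := hs.2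
      have := hk2l
      linarith [ht]
    have hkm : M - 2 ≤ k := by
      have hMk : M < k + 3 := by
        apply Int.floor_lt.2
        rw [div_lt_iff₀ hπ]
        have hs1 : 0 < s := hs.1
        push_cast
        nlinarith [hk2u]
      omega
    exact mem_biUnion (Finset.mem_Icc.2 ⟨hkm, hkM⟩) hmem
  have hb : volume (Ioc (0:ℝ) (2*π) ∩ {s | |Real.cos (s - α)| ≤ r}) ≤
      ENNReal.ofReal (3 * (π * r)) := by
    refine (measure_mono hsub).trans ?_
    refine (measure_biUnion_finset_le _ _).trans ?_
    have hcb : ∀ k ∈ Finset.Icc (M-2) M,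
        volume (closedBall (α + π/2 + (k:ℝ)*π) (π/2*r)) = ENNReal.ofReal (π*r) := by
      intro k _
      rw [Real.volume_closedBall]
      congr 1
      ring
    rw [Finset.sum_congr rfl hcb, Finset.sum_const, Int.card_Icc]
    rw [show M + 1 - (M - 2) = 3 by ring]
    rw [ENNReal.ofReal_mul (by norm_num : (0:ℝ) ≤ 3)]
    simp
  exact ENNReal.toReal_le_of_le_ofReal (by positivity) hb

lemma periodic_intervalIntegrable' {ψ : ℝ → ℝ} {T : ℝ} (hT : 0 < T)
    (hp : Function.Periodic ψ T) (h : IntervalIntegrable ψ volume 0 T) (a b : ℝ) :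
    IntervalIntegrable ψ volume a b := by
  have hstep : ∀ n : ℤ, IntervalIntegrable ψ volume (n*T) (n*T + T) := by
    intro n
    have h2 := h.comp_sub_right ((n:ℝ)*T)
    have heq : (fun x => ψ (x - (n:ℝ)*T)) = ψ := by
      funext x; exact hp.sub_int_mul_eq n
    rw [heq] at h2
    have e1 : (0:ℝ) + (n:ℝ)*T = n*T := by ring
    have e2 : T + (n:ℝ)*T = n*T + T := by ring
    rwa [e1, e2] at h2
  set n0 : ℤ := ⌊(min a b)/T⌋ with hn0
  set N : ℕ := (⌈(max a b)/T⌉ - n0).toNat with hN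
  have hchain : IntervalIntegrable ψ volume (((n0:ℝ))*T) (((n0:ℝ) + N)*T) := by
    have := IntervalIntegrable.trans_iterate
      (μ := volume) (f := ψ) (a := fun k : ℕ => ((n0:ℝ) + k)*T) (n := N)
      (fun k _ => by
        show IntervalIntegrable ψ volume (((n0:ℝ) + (k:ℕ))*T) (((n0:ℝ) + ((k:ℕ)+1:ℕ))*T)
        have := hstep (n0 + k)
        have e1 : ((n0:ℝ) + (k:ℝ))*T = ((n0 + k : ℤ):ℝ)*T := by push_cast; ring
        have e2 : ((n0:ℝ) + ((k:ℕ)+1:ℕ))*T = ((n0 + k : ℤ):ℝ)*T + T := by push_cast; ring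
        rw [e1, e2]
        exact this)
    simpa using this
  refine hchain.mono_set ?_
  rw [Set.uIcc_subset_uIcc_iff_le]
  have h1 : (n0:ℝ)*T ≤ min a b := by
    have := Int.floor_le ((min a b)/T)
    calc (n0:ℝ)*T ≤ ((min a b)/T)*T := mul_le_mul_of_nonneg_right this hT.le
      _ = min a b := by field_simp
  have h2 : max a b ≤ ((n0:ℝ) + N)*T := by
    have hceil := Int.le_ceil ((max a b)/T)
    have htn : (⌈(max a b)/T⌉ - n0 : ℤ) ≤ (N : ℤ) := Int.self_le_toNat _
    have hcast : (⌈(max a b)/T⌉ : ℝ) ≤ (n0:ℝ) + N := by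
      have h4 : ((⌈(max a b)/T⌉ - n0 : ℤ) : ℝ) ≤ ((N:ℤ):ℝ) := by exact_mod_cast htn
      push_cast at h4 ⊢
      linarith
    have h3 : (max a b)/T ≤ (n0:ℝ) + N := le_trans hceil hcast
    calc max a b = ((max a b)/T)*T := by field_simp
      _ ≤ ((n0:ℝ) + N)*T := mul_le_mul_of_nonneg_right h3 hT.le
  have hle : (n0:ℝ)*T ≤ ((n0:ℝ) + N)*T := by nlinarith [Nat.cast_nonneg (α := ℝ) N]
  rw [min_eq_left hle, max_eq_right hle]
  exact ⟨h1, h2⟩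

lemma key_bound' (φ : ℝ → ℝ) (hφ : IntegrableOn φ (Ioc (0:ℝ) (2*π)))
    (hper : ∀ s : ℝ, φ (s + π) = φ s)
    (a b : E2) (ha : ‖a‖ = 1)
    (w : ℝ → ℝ → ℝ) (d : ℝ → ℝ) (hw : ∀ s t, |w s t| ≤ 1)
    (hd1 : ∀ s, |d s| ≤ 1)
    (hd2 : ∀ s, d s ≠ 0 → |⟪esDir s, a⟫| ≤ ‖b - a‖) :
    |∫ s in Ioc (0:ℝ) (2*π), ∫ t in Ioc (0:ℝ) (2*π), φ (t - s) * w s t * d s|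
      ≤ 3 * π * (∫ s in Ioc (0:ℝ) (2*π), |φ s|) * ‖b - a‖ := by
  have hπ := Real.pi_pos
  set I := ∫ s in Ioc (0:ℝ) (2*π), |φ s| with hI
  have hI0 : 0 ≤ I := setIntegral_nonneg measurableSet_Ioc (fun _ _ => abs_nonneg _)
  have h2π : (0:ℝ) ≤ 2*π := by positivity
  have hp2 : Function.Periodic (fun t => |φ t|) (2*π) := by
    intro x; simp only; rw [show x + 2*π = x + π + π by ring, hper, hper]
  have hii : IntervalIntegrable (fun t => |φ t|) volume 0 (2*π) :=
    (intervalIntegrable_iff_integrableOn_Ioc_of_le h2π).2 hφ.abs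
  have hshift : ∀ s : ℝ, IntegrableOn (fun t => |φ (t - s)|) (Ioc (0:ℝ) (2*π)) := by
    intro s
    have h1 := (periodic_intervalIntegrable' (by positivity) hp2 hii (-s) (2*π - s)).comp_sub_right s
    rw [show -s + s = (0:ℝ) by ring, show 2*π - s + s = 2*π by ring] at h1
    exact (intervalIntegrable_iff_integrableOn_Ioc_of_le h2π).1 h1
  have hval : ∀ s : ℝ, (∫ t in Ioc (0:ℝ) (2*π), |φ (t - s)|) = I := by
    intro s
    rw [← intervalIntegral.integral_of_le h2π,
      intervalIntegral.integral_comp_sub_right (fun t => |φ t|) s]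
    have hp3 := hp2.intervalIntegral_add_eq (0 - s) 0
    rw [show (0:ℝ) - s + 2*π = 2*π - s by ring, show (0:ℝ) + 2*π = 2*π by ring] at hp3
    rw [hp3, intervalIntegral.integral_of_le h2π]
  set r := ‖b - a‖ with hr
  set Tset := {s : ℝ | |Real.cos (s - ang a)| ≤ r} with hTset
  have hTmeas : MeasurableSet Tset := by
    apply measurableSet_le ?_ measurable_const
    fun_prop
  set g : ℝ → ℝ := Tset.indicator (fun _ => I) with hg
  have hgint : Integrable g (volume.restrict (Ioc (0:ℝ) (2*π))) := by
    apply Integrable.indicator ?_ hTmeas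
    exact integrableOn_const measure_Ioc_lt_top.ne
  have hptw : ∀ s : ℝ,
      ‖∫ t in Ioc (0:ℝ) (2*π), φ (t - s) * w s t * d s‖ ≤ g s := by
    intro s
    by_cases hds : d s = 0
    · simp only [hds, mul_zero, integral_zero, norm_zero]
      exact Set.indicator_nonneg (fun _ _ => hI0) s
    · have hsT : s ∈ Tset := by
        rw [hTset, mem_setOf_eq, ← inner_esDir' s a ha]
        exact hd2 s hds
      have hgs : g s = I := by rw [hg, Set.indicator_of_mem hsT]
      rw [hgs]
      have hb1 : ∀ t, ‖φ (t - s) * w s t * d s‖ ≤ |φ (t - s)| := by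
        intro t
        rw [Real.norm_eq_abs, abs_mul, abs_mul]
        nlinarith [hw s t, hd1 s, abs_nonneg (φ (t - s)), abs_nonneg (w s t),
          abs_nonneg (d s), mul_nonneg (abs_nonneg (φ (t - s))) (abs_nonneg (w s t))]
      calc ‖∫ t in Ioc (0:ℝ) (2*π), φ (t - s) * w s t * d s‖
          ≤ ∫ t in Ioc (0:ℝ) (2*π), |φ (t - s)| :=
            norm_integral_le_of_norm_le (hshift s) (Filter.Eventually.of_forall hb1)
        _ = I := hval s
  have houter := norm_integral_le_of_norm_le hgint (Filter.Eventually.of_forall hptw)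
  rw [Real.norm_eq_abs] at houter
  have hgval : (∫ s in Ioc (0:ℝ) (2*π), g s)
      = (volume (Ioc (0:ℝ) (2*π) ∩ Tset)).toReal * I := by
    rw [hg, setIntegral_indicator hTmeas, setIntegral_const, smul_eq_mul]
    rfl
  have hmeas := measure_cos_le' (ang a) r (norm_nonneg _)
  calc |∫ s in Ioc (0:ℝ) (2*π), ∫ t in Ioc (0:ℝ) (2*π), φ (t - s) * w s t * d s|
      ≤ ∫ s in Ioc (0:ℝ) (2*π), g s := houter
    _ = (volume (Ioc (0:ℝ) (2*π) ∩ Tset)).toReal * I := hgval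
    _ ≤ (3 * (π * r)) * I := mul_le_mul_of_nonneg_right hmeas hI0
    _ = 3 * π * I * r := by ring


/-- Lemma 2.6, estimate on `A^τ`: there is an absolute constant
`C > 0` such that for every open `Ω ⊂ ℝ²`, measurable `u : Ω → S¹`, odd
`π`-periodic `φ ∈ L¹(T)` and `τ ∈ ℝ`,
`|A^τ(x)| ≤ C ‖φ‖_{L¹(T)} |D^{τe₁}u(x)|` for a.e. `x ∈ Ω ∩ (Ω - τe₁)`. -/

theorem stmt12 :
    ∃ C : ℝ, 0 < C ∧
      ∀ (Ω : Set E2), IsOpen Ω →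
      ∀ (u : E2 → E2), Measurable u →
        (∀ᵐ x ∂(volume.restrict Ω), ‖u x‖ = 1) →
      ∀ (φ : ℝ → ℝ), IntegrableOn φ (Ioc (0:ℝ) (2*π)) →
        (∀ s : ℝ, φ (-s) = - φ s) → (∀ s : ℝ, φ (s + π) = φ s) →
      ∀ τ : ℝ,
        ∀ᵐ x ∂(volume.restrict (Ω ∩ {x | x + τ • ee1 ∈ Ω})),
          Real.sqrt ((A1fun φ u τ x) ^ 2 + (A2fun φ u τ x) ^ 2) ≤
            C * (∫ s in Ioc (0:ℝ) (2*π), |φ s|) * ‖u (x + τ • ee1) - u x‖ := by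
  have hπ := Real.pi_pos
  refine ⟨6*π, by positivity, ?_⟩
  intro Ω hΩ u hu hu1 φ hφ hodd hper τ
  have hae : ∀ᵐ x ∂(volume.restrict (Ω ∩ {x | x + τ • ee1 ∈ Ω})), ‖u x‖ = 1 :=
    ae_restrict_of_ae_restrict_of_subset inter_subset_left hu1
  filter_upwards [hae] with x hx
  set I := ∫ s in Ioc (0:ℝ) (2*π), |φ s| with hI
  have hI0 : 0 ≤ I := setIntegral_nonneg measurableSet_Ioc (fun _ _ => abs_nonneg _)
  set b := u (x + τ • ee1) with hb
  set a := u x with ha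
  have hd1 : ∀ s, |chiInd u s (x + τ • ee1) - chiInd u s x| ≤ 1 := by
    intro s
    unfold chiInd
    split <;> split <;> norm_num
  have hd2 : ∀ s, chiInd u s (x + τ • ee1) - chiInd u s x ≠ 0 →
      |⟪esDir s, a⟫| ≤ ‖b - a‖ := by
    intro s hds
    have hre : ∀ y : E2, chiInd u s y = if 0 < ⟪esDir s, u y⟫ then (1:ℝ) else 0 := fun _ => rfl
    rw [hre, hre] at hds
    have hcs : |⟪esDir s, b - a⟫| ≤ ‖b - a‖ := by
      have h := abs_real_inner_le_norm (esDir s) (b - a)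
      rwa [norm_esDir', one_mul] at h
    rw [inner_sub_right] at hcs
    have hcs' := abs_le.1 hcs
    by_cases h1 : 0 < ⟪esDir s, u (x + τ • ee1)⟫ <;>
      by_cases h2 : 0 < ⟪esDir s, u x⟫
    · rw [if_pos h1, if_pos h2] at hds
      simp at hds
    · push_neg at h2
      rw [← ha] at h2
      rw [← hb] at h1
      have h0 : (0:ℝ) ≤ ‖b - a‖ := norm_nonneg _
      exact abs_le.2 ⟨by linarith [hcs'.1, hcs'.2], by linarith⟩
    · push_neg at h1
      rw [← ha] at h2
      rw [← hb] at h1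
      rw [abs_of_pos h2]
      linarith [hcs'.1]
    · rw [if_neg h1, if_neg h2] at hds
      simp at hds
  have hchi1 : ∀ s y, |chiInd u s y| ≤ 1 := by
    intro s y
    unfold chiInd
    split <;> norm_num
  have hw1 : ∀ s t, |Real.sin t * Real.cos s * chiInd u t (x + τ • ee1)| ≤ 1 := by
    intro s t
    rw [abs_mul, abs_mul]
    have := Real.abs_sin_le_one t
    have := Real.abs_cos_le_one s
    have := hchi1 t (x + τ • ee1)
    exact mul_le_one₀ (mul_le_one₀ (Real.abs_sin_le_one t) (abs_nonneg _)
      (Real.abs_cos_le_one s)) (abs_nonneg _) (hchi1 t (x + τ • ee1))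
  have hw2 : ∀ s t, |Real.sin t * Real.sin s * chiInd u t x| ≤ 1 := by
    intro s t
    rw [abs_mul, abs_mul]
    have := Real.abs_sin_le_one t
    have := Real.abs_sin_le_one s
    have := hchi1 t x
    exact mul_le_one₀ (mul_le_one₀ (Real.abs_sin_le_one t) (abs_nonneg _)
      (Real.abs_sin_le_one s)) (abs_nonneg _) (hchi1 t x)
  have hA1eq : A1fun φ u τ x = ∫ s in Ioc (0:ℝ) (2*π), ∫ t in Ioc (0:ℝ) (2*π),
      φ (t - s) * (Real.sin t * Real.cos s * chiInd u t (x + τ • ee1)) *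
        (chiInd u s (x + τ • ee1) - chiInd u s x) := by
    unfold A1fun
    refine integral_congr_ae (Filter.Eventually.of_forall fun s => ?_)
    refine integral_congr_ae (Filter.Eventually.of_forall fun t => ?_)
    ring
  have hA2eq : A2fun φ u τ x = ∫ s in Ioc (0:ℝ) (2*π), ∫ t in Ioc (0:ℝ) (2*π),
      φ (t - s) * (Real.sin t * Real.sin s * chiInd u t x) *
        (chiInd u s (x + τ • ee1) - chiInd u s x) := by
    unfold A2fun
    refine integral_congr_ae (Filter.Eventually.of_forall fun s => ?_)
    refine integral_congr_ae (Filter.Eventually.of_forall fun t => ?_)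
    ring
  have hA1 : |A1fun φ u τ x| ≤ 3 * π * I * ‖b - a‖ := by
    rw [hA1eq]
    exact key_bound' φ hφ hper a b hx
      (fun s t => Real.sin t * Real.cos s * chiInd u t (x + τ • ee1))
      (fun s => chiInd u s (x + τ • ee1) - chiInd u s x) hw1 hd1 hd2
  have hA2 : |A2fun φ u τ x| ≤ 3 * π * I * ‖b - a‖ := by
    rw [hA2eq]
    exact key_bound' φ hφ hper a b hx
      (fun s t => Real.sin t * Real.sin s * chiInd u t x)
      (fun s => chiInd u s (x + τ • ee1) - chiInd u s x) hw2 hd1 hd2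
  have hsq : Real.sqrt ((A1fun φ u τ x) ^ 2 + (A2fun φ u τ x) ^ 2)
      ≤ |A1fun φ u τ x| + |A2fun φ u τ x| := by
    rw [← Real.sqrt_sq (by positivity : (0:ℝ) ≤ |A1fun φ u τ x| + |A2fun φ u τ x|)]
    apply Real.sqrt_le_sqrt
    nlinarith [mul_nonneg (abs_nonneg (A1fun φ u τ x)) (abs_nonneg (A2fun φ u τ x)),
      sq_abs (A1fun φ u τ x), sq_abs (A2fun φ u τ x)]
  have : ‖u (x + τ • ee1) - u x‖ = ‖b - a‖ := by rw [hb, ha]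
  rw [this]
  calc Real.sqrt ((A1fun φ u τ x) ^ 2 + (A2fun φ u τ x) ^ 2)
      ≤ |A1fun φ u τ x| + |A2fun φ u τ x| := hsq
    _ ≤ 3 * π * I * ‖b - a‖ + 3 * π * I * ‖b - a‖ := add_le_add hA1 hA2
    _ = 6 * π * I * ‖b - a‖ := by ring
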